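/- arXiv:2110.11293 — 2 statements merged into one kernel-verified Lean document; each statement's English description precedes it below -/
import Mathlib

section
/- Let (Ω, μ) be a probability space, s ≥ 0 a real number, and h : Ω → ℝ a measurable function such that for every real m the functions ω ↦ log(σ(s·(h(ω) − m))) and ω ↦ log(σ(s·(−h(ω) − m))) are μ-integrable. Define L(m) = −∫ log(σ(s·(h(ω) − m))) dμ(ω) − ∫ log(σ(s·(−h(ω) − m))) dμ(ω). Then L is monotone nondecreasing on ℝ. -/
open MeasureTheory

noncomputable def sigmoid (x : ℝ) : ℝ := 1 / (1 + Real.exp (-x))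

lemma sigmoid_pos (x : ℝ) : 0 < sigmoid x := by
  unfold sigmoid
  positivity

lemma sigmoid_mono : Monotone sigmoid := by
  intro a b hab
  unfold sigmoid
  apply one_div_le_one_div_of_le
  · positivity
  · have := Real.exp_le_exp.mpr (neg_le_neg hab)
    linarith

lemma log_sigmoid_mono {a b : ℝ} (hab : a ≤ b) :
    Real.log (sigmoid a) ≤ Real.log (sigmoid b) :=
  Real.log_le_log (sigmoid_pos a) (sigmoid_mono hab)

theorem RMCosGAN_monotone
    {Ω : Type*} [MeasurableSpace Ω] (μ : Measure Ω) [IsProbabilityMeasure μ]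
    (s : ℝ) (hs : 0 ≤ s) (h : Ω → ℝ) (hmeas : Measurable h)
    (hint₁ : ∀ m : ℝ, Integrable (fun ω => Real.log (sigmoid (s * (h ω - m)))) μ)
    (hint₂ : ∀ m : ℝ, Integrable (fun ω => Real.log (sigmoid (s * (-h ω - m)))) μ)
    (L : ℝ → ℝ)
    (hL : ∀ m : ℝ, L m =
      -∫ ω, Real.log (sigmoid (s * (h ω - m))) ∂μ
      - ∫ ω, Real.log (sigmoid (s * (-h ω - m))) ∂μ) :
    Monotone L := by
  intro m₁ m₂ hm
  rw [hL m₁, hL m₂]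
  have h1 : ∫ ω, Real.log (sigmoid (s * (h ω - m₂))) ∂μ
      ≤ ∫ ω, Real.log (sigmoid (s * (h ω - m₁))) ∂μ := by
    apply integral_mono (hint₁ m₂) (hint₁ m₁)
    intro ω
    exact log_sigmoid_mono (by nlinarith)
  have h2 : ∫ ω, Real.log (sigmoid (s * (-h ω - m₂))) ∂μ
      ≤ ∫ ω, Real.log (sigmoid (s * (-h ω - m₁))) ∂μ := by
    apply integral_mono (hint₂ m₂) (hint₂ m₁)
    intro ω
    exact log_sigmoid_mono (by nlinarith)
  linarith
end

section
/- Let (Ω, μ) be a probability space, s > 0 a real number, and h : Ω → ℝ a measurable function such that for every real m the functions ω ↦ log(σ(s·(h(ω) − m))) and ω ↦ log(σ(s·(−h(ω) − m))) are μ-integrable. Define L(m) = −∫ log(σ(s·(h(ω) − m))) dμ(ω) − ∫ log(σ(s·(−h(ω) − m))) dμ(ω). Then for every m < 0 one has L(m) < L(0); that is, the RMCosGAN objective with negative margin is strictly smaller than the RSGAN objective. -/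
open MeasureTheory

lemma sigmoid_strictMono : StrictMono sigmoid := by
  intro x y hxy
  unfold sigmoid
  apply one_div_lt_one_div_of_lt
  · positivity
  · have := Real.exp_lt_exp.mpr (neg_lt_neg hxy)
    linarith

lemma log_sigmoid_lt {x y : ℝ} (hxy : x < y) :
    Real.log (sigmoid x) < Real.log (sigmoid y) :=
  Real.log_lt_log (sigmoid_pos x) (sigmoid_strictMono hxy)

theorem RMCosGAN_neg_margin_lt_RSGAN
    {Ω : Type*} [MeasurableSpace Ω] (μ : Measure Ω) [IsProbabilityMeasure μ]
    (s : ℝ) (hs : 0 < s) (h : Ω → ℝ) (hmeas : Measurable h)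
    (hint₁ : ∀ m : ℝ, Integrable (fun ω => Real.log (sigmoid (s * (h ω - m)))) μ)
    (hint₂ : ∀ m : ℝ, Integrable (fun ω => Real.log (sigmoid (s * (-h ω - m)))) μ)
    (L : ℝ → ℝ)
    (hL : ∀ m : ℝ, L m =
      -∫ ω, Real.log (sigmoid (s * (h ω - m))) ∂μ
      - ∫ ω, Real.log (sigmoid (s * (-h ω - m))) ∂μ) :
    ∀ m : ℝ, m < 0 → L m < L 0 := by
  intro m hm
  set D : Ω → ℝ := fun ω =>
    (Real.log (sigmoid (s * (h ω - m))) - Real.log (sigmoid (s * (h ω - 0))))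
    + (Real.log (sigmoid (s * (-h ω - m))) - Real.log (sigmoid (s * (-h ω - 0)))) with hD
  have hDpos : ∀ ω, 0 < D ω := by
    intro ω
    have h1 : Real.log (sigmoid (s * (h ω - 0))) < Real.log (sigmoid (s * (h ω - m))) :=
      log_sigmoid_lt (by nlinarith)
    have h2 : Real.log (sigmoid (s * (-h ω - 0))) < Real.log (sigmoid (s * (-h ω - m))) :=
      log_sigmoid_lt (by nlinarith)
    simp only [hD]; linarith
  have hDint : Integrable D μ :=
    (((hint₁ m).sub (hint₁ 0)).add ((hint₂ m).sub (hint₂ 0)))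
  have hIpos : 0 < ∫ ω, D ω ∂μ := by
    rw [integral_pos_iff_support_of_nonneg (fun ω => (hDpos ω).le) hDint]
    have : (Function.support D) = Set.univ := by
      ext ω; simp [Function.support, (hDpos ω).ne']
    rw [this]
    simp
  have hi1 : Integrable (fun ω => Real.log (sigmoid (s * (h ω - m)))
      - Real.log (sigmoid (s * (h ω - 0)))) μ := (hint₁ m).sub (hint₁ 0)
  have hi2 : Integrable (fun ω => Real.log (sigmoid (s * (-h ω - m)))
      - Real.log (sigmoid (s * (-h ω - 0)))) μ := (hint₂ m).sub (hint₂ 0)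
  rw [integral_add hi1 hi2, integral_sub (hint₁ m) (hint₁ 0),
    integral_sub (hint₂ m) (hint₂ 0)] at hIpos
  rw [hL m, hL 0]
  linarith
end
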